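/- For every integer d ≥ 2 and every constant K > 0 there exist c ∈ ℕ and C_1 > 0 with the following property: for every r ∈ ℕ with r > c, every set T ⊂ [0,1)^d with |T| = 2^r and disp(T) < K·2^{−r}, every s ∈ ℕ_0^d with s_1 + … + s_d = r − c, and every trigonometric polynomial f ∈ 𝓣(R(s)), one has C_1·‖f‖_∞ ≤ max_{x ∈ T} |f(2πx)| ≤ ‖f‖_∞. -/

import Mathlib

/-!
The upper bound holds because `f` is `2π`-periodic, so its supremum over `[0, 2π)^d` is its
supremum over `ℝ^d`. For the lower bound, fix a maximum point `x*` of `|f|`, `M = |f(x*)|`.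
Along the coordinate `j`, `f` is an exponential sum with integer frequencies `|k| ≤ n = 2^{s_j}`;
multiplied by `e^{inz}` it becomes a polynomial in `e^{iz}`, so the maximum modulus principle
bounds it by `M e^{n |Im z|}`, and Cauchy's estimate on circles of radius `1/n` makes it
`e n M`-Lipschitz on `ℝ`. Changing one coordinate at a time,
`|f(y) - f(x*)| ≤ e M ∑_j 2^{s_j} |y_j - x*_j|`. The box around `x*/2π` with sides
`δ_j = 1 / (4π e d 2^{s_j})` has volume `2^{-(r-c)} / (4π e d)^d ≥ K 2^{-r} > disp(T)` for `c`
large, so it contains some `t ∈ T`, and then `|f(2πt)| ≥ M / 2`.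
-/

/-- The dispersion of a set T ⊆ [0,1)^d: the supremum of volumes of axis-parallel boxes
prod_j [x_j, y_j) ⊆ [0,1)^d containing no point of T. -/
noncomputable def disp (d : ℕ) (T : Set (Fin d → ℝ)) : ℝ :=
  sSup {V : ℝ | ∃ x y : Fin d → ℝ,
    (∀ j, 0 ≤ x j ∧ x j ≤ y j ∧ y j ≤ 1) ∧
    (∀ t ∈ T, ∃ j, t j < x j ∨ y j ≤ t j) ∧
    V = ∏ j, (y j - x j)}

/-- R(s) = {k in Z^d : |k_j| < 2^{s_j}, j = 1,...,d}, as a finset. -/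
noncomputable def Rbox (d : ℕ) (s : Fin d → ℕ) : Finset (Fin d → ℤ) :=
  Finset.Icc (fun j => -((2 : ℤ) ^ (s j)) + 1) (fun j => (2 : ℤ) ^ (s j) - 1)

/-- The trigonometric polynomial with frequencies in Q and coefficients c:
f(x) = sum_{k in Q} c_k e^{i(k,x)}. -/
noncomputable def trigPoly (d : ℕ) (Q : Finset (Fin d → ℤ)) (c : (Fin d → ℤ) → ℂ)
    (x : Fin d → ℝ) : ℂ :=
  ∑ k ∈ Q, c k * Complex.exp (Complex.I * ∑ j, (k j : ℂ) * (x j : ℂ))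

/-- The uniform norm of f over [0,2π)^d. -/
noncomputable def supNorm (d : ℕ) (f : (Fin d → ℝ) → ℂ) : ℝ :=
  ⨆ x : ↥(Set.univ.pi fun _ : Fin d => Set.Ico (0 : ℝ) (2 * Real.pi)),
    ‖f (x : Fin d → ℝ)‖

open Complex Metric Finset Function

noncomputable def expSum {ι : Type*} (Q : Finset ι) (b : ι → ℂ) (m : ι → ℤ) (z : ℂ) : ℂ :=
  ∑ i ∈ Q, b i * exp (I * (m i * z))

section ExpSum

variable {ι : Type*} (Q : Finset ι) (b : ι → ℂ) (m : ι → ℤ)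

theorem differentiable_expSum : Differentiable ℂ (expSum Q b m) :=
  Differentiable.fun_sum fun _ _ =>
    (((differentiable_id.const_mul _).const_mul _).cexp).const_mul _

theorem expSum_eq_exp_mul_expSum_add (n : ℤ) (z : ℂ) :
    expSum Q b m z = exp (-(I * (n * z))) * expSum Q b (fun i => m i + n) z := by
  rw [expSum, expSum, mul_sum]
  refine sum_congr rfl fun i _ => ?_
  rw [mul_left_comm (exp _), ← exp_add]
  push_cast
  ring_nf

theorem expSum_neg (z : ℂ) : expSum Q b m z = expSum Q b (-m) (-z) := by
  simp only [expSum, Pi.neg_apply, Int.cast_neg, neg_mul_neg]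

variable {Q b m} {M : ℝ}

theorem norm_expSum_le_of_nonneg_of_im_nonneg (hm : ∀ i ∈ Q, 0 ≤ m i)
    (hM : ∀ x : ℝ, ‖expSum Q b m x‖ ≤ M) {z : ℂ} (hz : 0 ≤ z.im) :
    ‖expSum Q b m z‖ ≤ M := by
  set P : ℂ → ℂ := fun q => ∑ i ∈ Q, b i * q ^ (m i).toNat
  have hP : ∀ w, P (exp (I * w)) = expSum Q b m w := fun w =>
    sum_congr rfl fun i hi => by
      rw [← exp_nat_mul, ← Int.cast_natCast, Int.toNat_of_nonneg (hm i hi), mul_left_comm]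
  have hdiff : Differentiable ℂ P :=
    Differentiable.fun_sum fun i _ => (differentiable_pow _).const_mul _
  have hfrontier : ∀ q ∈ frontier (ball (0 : ℂ) 1), ‖P q‖ ≤ M := by
    intro q hq
    rw [frontier_ball _ one_ne_zero, mem_sphere_zero_iff_norm] at hq
    obtain ⟨θ, rfl⟩ := (norm_eq_one_iff q).mp hq
    rw [mul_comm, hP]
    exact hM θ
  have hmem : exp (I * z) ∈ closure (ball (0 : ℂ) 1) := by
    rw [closure_ball _ one_ne_zero, mem_closedBall_zero_iff, norm_exp]
    simpa using hz
  rw [← hP]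
  exact norm_le_of_forall_mem_frontier_norm_le isBounded_ball hdiff.diffContOnCl hfrontier hmem

theorem norm_expSum_le_mul_exp_im {n : ℕ} (hm : ∀ i ∈ Q, |m i| ≤ n)
    (hM : ∀ x : ℝ, ‖expSum Q b m x‖ ≤ M) {z : ℂ} (hz : 0 ≤ z.im) :
    ‖expSum Q b m z‖ ≤ M * Real.exp (n * z.im) := by
  have hshift : ∀ w : ℂ, ‖expSum Q b m w‖ =
      Real.exp (n * w.im) * ‖expSum Q b (fun i => m i + n) w‖ := fun w => by
    rw [expSum_eq_exp_mul_expSum_add Q b m n, norm_mul, norm_exp]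
    simp
  have hM' : ∀ x : ℝ, ‖expSum Q b (fun i => m i + n) x‖ ≤ M := fun x => by
    simpa [hshift] using hM x
  have hnonneg : ∀ i ∈ Q, 0 ≤ m i + n := fun i hi => by
    linarith [neg_abs_le (m i), hm i hi]
  rw [hshift, mul_comm]
  exact mul_le_mul_of_nonneg_right
    (norm_expSum_le_of_nonneg_of_im_nonneg hnonneg hM' hz) (Real.exp_nonneg _)

theorem norm_expSum_le_mul_exp_abs_im {n : ℕ} (hm : ∀ i ∈ Q, |m i| ≤ n)
    (hM : ∀ x : ℝ, ‖expSum Q b m x‖ ≤ M) (z : ℂ) :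
    ‖expSum Q b m z‖ ≤ M * Real.exp (n * |z.im|) := by
  rcases le_total 0 z.im with hz | hz
  · rw [abs_of_nonneg hz]
    exact norm_expSum_le_mul_exp_im hm hM hz
  · rw [abs_of_nonpos hz, ← neg_im, expSum_neg]
    refine norm_expSum_le_mul_exp_im (fun i hi => by simpa using hm i hi) (fun x => ?_)
      (by simpa using hz)
    simpa only [expSum_neg Q b m, ofReal_neg, neg_neg] using hM (-x)

theorem norm_deriv_expSum_le {n : ℕ} (hn : 0 < n) (hm : ∀ i ∈ Q, |m i| ≤ n)
    (hM : ∀ x : ℝ, ‖expSum Q b m x‖ ≤ M) (x : ℝ) :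
    ‖deriv (expSum Q b m) x‖ ≤ Real.exp 1 * n * M := by
  have hn' : (0 : ℝ) < n := by exact_mod_cast hn
  have hsphere : ∀ z ∈ sphere (x : ℂ) (1 / n), ‖expSum Q b m z‖ ≤ M * Real.exp 1 := by
    intro z hz
    refine (norm_expSum_le_mul_exp_abs_im hm hM z).trans ?_
    have hM0 : 0 ≤ M := (norm_nonneg _).trans (hM 0)
    have him : |z.im| ≤ 1 / n := by
      simpa [← mem_sphere_iff_norm.mp hz] using abs_im_le_norm (z - x)
    gcongr
    calc (n : ℝ) * |z.im| ≤ n * (1 / n) := by gcongr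
      _ = 1 := by field_simp
  have := norm_deriv_le_of_forall_mem_sphere_norm_le (by positivity)
    (differentiable_expSum Q b m).diffContOnCl hsphere
  exact this.trans_eq (by field_simp)

theorem norm_expSum_sub_le {n : ℕ} (hn : 0 < n) (hm : ∀ i ∈ Q, |m i| ≤ n)
    (hM : ∀ x : ℝ, ‖expSum Q b m x‖ ≤ M) (x y : ℝ) :
    ‖expSum Q b m y - expSum Q b m x‖ ≤ Real.exp 1 * n * M * |y - x| := by
  have hderiv : ∀ t : ℝ, HasDerivAt (fun u : ℝ => expSum Q b m u) (deriv (expSum Q b m) t) t :=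
    fun t => ((differentiable_expSum Q b m) t).hasDerivAt.comp_ofReal
  simpa [← Real.norm_eq_abs] using convex_univ.norm_image_sub_le_of_norm_deriv_le
    (fun t _ => (hderiv t).differentiableAt)
    (fun t _ => (hderiv t).deriv ▸ norm_deriv_expSum_le hn hm hM t)
    (Set.mem_univ x) (Set.mem_univ y)

end ExpSum

theorem norm_sub_le_sum_of_forall_update {ι α E : Type*} [Fintype ι] [DecidableEq ι]
    [PseudoMetricSpace α] [SeminormedAddCommGroup E] {f : (ι → α) → E} (L : ι → ℝ)
    (hf : ∀ x j w, ‖f (update x j w) - f x‖ ≤ L j * dist w (x j)) (x y : ι → α) :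
    ‖f y - f x‖ ≤ ∑ j, L j * dist (y j) (x j) := by
  suffices h : ∀ S : Finset ι, ‖f (S.piecewise y x) - f x‖ ≤ ∑ j ∈ S, L j * dist (y j) (x j) by
    simpa using h univ
  intro S
  induction S using Finset.induction_on with
  | empty => simp
  | insert j S hj ih =>
    rw [piecewise_insert, sum_insert hj]
    calc ‖f (update (S.piecewise y x) j (y j)) - f x‖
        ≤ ‖f (update (S.piecewise y x) j (y j)) - f (S.piecewise y x)‖
          + ‖f (S.piecewise y x) - f x‖ := norm_sub_le_norm_sub_add_norm_sub _ _ _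
      _ ≤ L j * dist (y j) (x j) + ∑ j ∈ S, L j * dist (y j) (x j) := by
        gcongr
        simpa [piecewise_eq_of_notMem _ _ _ hj] using hf (S.piecewise y x) j (y j)

section TrigPoly

variable {d : ℕ} (Q : Finset (Fin d → ℤ)) (c : (Fin d → ℤ) → ℂ)

theorem trigPoly_update (x : Fin d → ℝ) (j : Fin d) (w : ℝ) :
    trigPoly d Q c (update x j w) =
      expSum Q (fun k => c k * exp (I * ∑ l ∈ univ.erase j, (k l : ℂ) * (x l : ℂ)))
        (fun k => k j) w := by
  refine sum_congr rfl fun k _ => ?_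
  rw [← sum_erase_add _ _ (mem_univ j), update_self,
    sum_congr rfl fun l hl => by rw [update_of_ne (ne_of_mem_erase hl)], mul_add, exp_add,
    mul_assoc]

theorem trigPoly_add_int_mul_two_pi (x : Fin d → ℝ) (m : Fin d → ℤ) :
    trigPoly d Q c (fun j => x j + m j * (2 * Real.pi)) = trigPoly d Q c x := by
  refine sum_congr rfl fun k _ => ?_
  have hsum : I * ∑ j, (k j : ℂ) * ((x j + m j * (2 * Real.pi) : ℝ) : ℂ) =
      I * ∑ j, (k j : ℂ) * (x j : ℂ) + ((∑ j, k j * m j : ℤ) : ℂ) * (2 * Real.pi * I) := by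
    push_cast
    rw [sum_mul, mul_sum, mul_sum, ← sum_add_distrib]
    exact sum_congr rfl fun j _ => by ring
  rw [hsum, exp_add, exp_int_mul_two_pi_mul_I, mul_one]

theorem trigPoly_toIcoMod (x : Fin d → ℝ) :
    trigPoly d Q c (fun j => toIcoMod Real.two_pi_pos 0 (x j)) = trigPoly d Q c x := by
  rw [← trigPoly_add_int_mul_two_pi Q c _ fun j => toIcoDiv Real.two_pi_pos 0 (x j)]
  congr 1
  funext j
  rw [← zsmul_eq_mul, ← self_sub_toIcoMod, add_sub_cancel]

theorem continuous_trigPoly : Continuous (trigPoly d Q c) := by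
  unfold trigPoly
  fun_prop

theorem exists_forall_norm_trigPoly_le :
    ∃ xm ∈ Set.univ.pi fun _ : Fin d => Set.Ico (0 : ℝ) (2 * Real.pi),
      ∀ x, ‖trigPoly d Q c x‖ ≤ ‖trigPoly d Q c xm‖ := by
  have hred : ∀ x : Fin d → ℝ, (fun j => toIcoMod Real.two_pi_pos 0 (x j)) ∈
      Set.univ.pi fun _ : Fin d => Set.Ico (0 : ℝ) (2 * Real.pi) := fun x j _ => by
    simpa using toIcoMod_mem_Ico Real.two_pi_pos 0 (x j)
  obtain ⟨x₀, -, hx₀⟩ := (isCompact_univ_pi fun _ => isCompact_Icc).exists_isMaxOn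
    ⟨0, fun _ _ => ⟨le_rfl, Real.two_pi_pos.le⟩⟩
    (continuous_trigPoly Q c).norm.continuousOn
  refine ⟨_, hred x₀, fun x => ?_⟩
  rw [trigPoly_toIcoMod, ← trigPoly_toIcoMod Q c x]
  exact hx₀ (Set.pi_mono (fun _ _ => Set.Ico_subset_Icc_self) (hred x))

variable {Q} {M : ℝ}

theorem norm_trigPoly_update_sub_le (hM : ∀ x, ‖trigPoly d Q c x‖ ≤ M) {j : Fin d} {n : ℕ}
    (hn : 0 < n) (hQ : ∀ k ∈ Q, |k j| ≤ n) (x : Fin d → ℝ) (w : ℝ) :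
    ‖trigPoly d Q c (update x j w) - trigPoly d Q c x‖ ≤ Real.exp 1 * n * M * |w - x j| := by
  have h := norm_expSum_sub_le hn hQ (fun y => trigPoly_update Q c x j y ▸ hM _) (x j) w
  rwa [← trigPoly_update, ← trigPoly_update, update_eq_self] at h

theorem norm_trigPoly_sub_le (hM : ∀ x, ‖trigPoly d Q c x‖ ≤ M) {n : Fin d → ℕ}
    (hn : ∀ j, 0 < n j) (hQ : ∀ k ∈ Q, ∀ j, |k j| ≤ n j) (x y : Fin d → ℝ) :
    ‖trigPoly d Q c y - trigPoly d Q c x‖ ≤ ∑ j, Real.exp 1 * n j * M * |y j - x j| := by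
  simpa only [Real.dist_eq] using norm_sub_le_sum_of_forall_update _
    (fun x j w => by
      simpa only [Real.dist_eq] using
        norm_trigPoly_update_sub_le c hM (hn j) (fun k hk => hQ k hk j) x w) x y

end TrigPoly

theorem abs_le_of_mem_Rbox {d : ℕ} {s : Fin d → ℕ} {k : Fin d → ℤ} (hk : k ∈ Rbox d s)
    (j : Fin d) : |k j| ≤ 2 ^ s j := by
  rw [Rbox, mem_Icc] at hk
  have := hk.1 j
  have := hk.2 j
  rw [abs_le]
  constructor <;> linarith

theorem supNorm_eq_of_forall_norm_le {d : ℕ} {f : (Fin d → ℝ) → ℂ} {xm : Fin d → ℝ}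
    (hxm : xm ∈ Set.univ.pi fun _ : Fin d => Set.Ico (0 : ℝ) (2 * Real.pi))
    (hmax : ∀ x, ‖f x‖ ≤ ‖f xm‖) : supNorm d f = ‖f xm‖ :=
  le_antisymm (Real.iSup_le (fun x => hmax x) (norm_nonneg _))
    (le_ciSup (f := fun x : Set.univ.pi _ => ‖f x‖) ⟨_, Set.forall_mem_range.2 fun x => hmax x⟩
      ⟨xm, hxm⟩)

theorem exists_mem_abs_sub_le_of_disp_lt {d : ℕ} {T : Set (Fin d → ℝ)} {u δ : Fin d → ℝ}
    (hu : ∀ j, u j ∈ Set.Icc (0 : ℝ) 1) (hδ : ∀ j, δ j ∈ Set.Icc (0 : ℝ) 1)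
    (hT : disp d T < ∏ j, δ j) : ∃ t ∈ T, ∀ j, |t j - u j| ≤ δ j := by
  set a : Fin d → ℝ := fun j => min (u j) (1 - δ j)
  by_contra! hfar
  have hbdd : BddAbove {V : ℝ | ∃ x y : Fin d → ℝ,
      (∀ j, 0 ≤ x j ∧ x j ≤ y j ∧ y j ≤ 1) ∧ (∀ t ∈ T, ∃ j, t j < x j ∨ y j ≤ t j) ∧
      V = ∏ j, (y j - x j)} := by
    refine ⟨1, ?_⟩
    rintro _ ⟨x, y, hxy, -, rfl⟩
    exact prod_le_one (fun j _ => by linarith [hxy j]) (fun j _ => by linarith [hxy j])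
  refine hT.not_ge (le_csSup hbdd ⟨a, a + δ, fun j => ?_, fun t ht => ?_, by simp⟩)
  · have := hu j; have := hδ j
    simp only [a, Pi.add_apply, Set.mem_Icc] at *
    refine ⟨le_min (by linarith) (by linarith), by linarith, ?_⟩
    linarith [min_le_right (u j) (1 - δ j)]
  · obtain ⟨j, hj⟩ := hfar t ht
    refine ⟨j, ?_⟩
    by_contra! hin
    obtain ⟨hlow, hupp⟩ := hin
    have := hu j; have := hδ j
    simp only [a, Pi.add_apply, Set.mem_Icc] at *
    rw [lt_abs] at hj
    rcases min_cases (u j) (1 - δ j) with ⟨hmin, _⟩ | ⟨hmin, _⟩ <;> rw [hmin] at hlow hupp <;>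
      rcases hj with hj | hj <;> linarith

theorem norm_trigPoly_Rbox_sub_le_half {d : ℕ} {s : Fin d → ℕ} (coef : (Fin d → ℤ) → ℂ)
    {M : ℝ} (hM : ∀ x, ‖trigPoly d (Rbox d s) coef x‖ ≤ M) {x y : Fin d → ℝ}
    (hxy : ∀ j, |y j - x j| ≤ 1 / (2 * Real.exp 1 * d * 2 ^ s j)) :
    ‖trigPoly d (Rbox d s) coef y - trigPoly d (Rbox d s) coef x‖ ≤ M / 2 := by
  have hM0 : 0 ≤ M := (norm_nonneg _).trans (hM 0)
  have hterm : ∀ j, Real.exp 1 * ((2 ^ s j : ℕ) : ℝ) * M * |y j - x j| ≤ M / (2 * d) :=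
    fun j => by
      have : (0 : ℝ) < d := by exact_mod_cast j.pos
      calc _ ≤ Real.exp 1 * 2 ^ s j * M * (1 / (2 * Real.exp 1 * d * 2 ^ s j)) := by
            push_cast; gcongr; exact hxy j
        _ = M / (2 * d) := by field_simp
  calc _ ≤ ∑ j, Real.exp 1 * ((2 ^ s j : ℕ) : ℝ) * M * |y j - x j| :=
        norm_trigPoly_sub_le coef hM (fun j => by positivity)
          (fun k hk j => by exact_mod_cast abs_le_of_mem_Rbox hk j) x y
    _ ≤ ∑ _j : Fin d, M / (2 * d) := sum_le_sum fun j _ => hterm j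
    _ ≤ M / 2 := by
      rw [sum_const, card_univ, Fintype.card_fin, nsmul_eq_mul]
      rcases d.eq_zero_or_pos with rfl | hd
      · simp only [CharP.cast_eq_zero, zero_mul]
        positivity
      · exact (by field_simp : (d : ℝ) * (M / (2 * d)) = M / 2).le

theorem exists_mem_half_norm_le_norm_trigPoly {d : ℕ} {s : Fin d → ℕ}
    (coef : (Fin d → ℤ) → ℂ) {xm : Fin d → ℝ}
    (hxm : xm ∈ Set.univ.pi fun _ : Fin d => Set.Ico (0 : ℝ) (2 * Real.pi))
    (hmax : ∀ x, ‖trigPoly d (Rbox d s) coef x‖ ≤ ‖trigPoly d (Rbox d s) coef xm‖)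
    {T : Set (Fin d → ℝ)}
    (hT : disp d T < ∏ j, 1 / (4 * Real.pi * Real.exp 1 * d * 2 ^ s j)) :
    ∃ t ∈ T, ‖trigPoly d (Rbox d s) coef xm‖ / 2 ≤
      ‖trigPoly d (Rbox d s) coef fun j => 2 * Real.pi * t j‖ := by
  have hδ : ∀ j, 1 / (4 * Real.pi * Real.exp 1 * d * 2 ^ s j) ∈ Set.Icc (0 : ℝ) 1 := fun j => by
    have hπ : 1 ≤ Real.pi := by linarith [Real.pi_gt_three]
    have he : 1 ≤ Real.exp 1 := Real.one_le_exp zero_le_one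
    have hd : (1 : ℝ) ≤ d := by exact_mod_cast j.pos
    have hs : (1 : ℝ) ≤ 2 ^ s j := one_le_pow₀ one_le_two
    refine ⟨by positivity, div_le_one_of_le₀ ?_ (by positivity)⟩
    calc (1 : ℝ) = 1 * 1 * 1 * 1 * 1 := by norm_num
      _ ≤ 4 * Real.pi * Real.exp 1 * d * 2 ^ s j := by gcongr; norm_num
  obtain ⟨t, htT, ht⟩ := exists_mem_abs_sub_le_of_disp_lt (u := fun j => xm j / (2 * Real.pi))
    (fun j => ⟨div_nonneg (hxm j trivial).1 Real.two_pi_pos.le,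
      (div_le_one Real.two_pi_pos).2 (hxm j trivial).2.le⟩) hδ hT
  have hclose := norm_trigPoly_Rbox_sub_le_half coef hmax (x := xm)
    (y := fun j => 2 * Real.pi * t j) fun j => by
      have : (0 : ℝ) < d := by exact_mod_cast j.pos
      calc |2 * Real.pi * t j - xm j| = 2 * Real.pi * |t j - xm j / (2 * Real.pi)| := by
            rw [← abs_of_pos Real.two_pi_pos, ← abs_mul, abs_of_pos Real.two_pi_pos, mul_sub,
              mul_div_cancel₀ _ Real.two_pi_pos.ne']
        _ ≤ 2 * Real.pi * (1 / (4 * Real.pi * Real.exp 1 * d * 2 ^ s j)) := by gcongr; exact ht j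
        _ = 1 / (2 * Real.exp 1 * d * 2 ^ s j) := by field_simp; ring
  refine ⟨t, htT, ?_⟩
  have := norm_sub_norm_le (trigPoly d (Rbox d s) coef xm)
    (trigPoly d (Rbox d s) coef fun j => 2 * Real.pi * t j)
  rw [norm_sub_rev] at hclose
  linarith

/-- (Temlyakov) For every d >= 2 and every K > 0 there exist c in N and C_1 > 0 such that:
for every r > c, every T ⊆ [0,1)^d with |T| = 2^r and disp(T) < K 2^{-r}, every s in N_0^d
with s_1 + ... + s_d = r - c, and every f in T(R(s)), one has
C_1 ||f||_inf <= max_{x in T} |f(2πx)| <= ||f||_inf. -/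
theorem statement15 :
    ∀ d : ℕ, 2 ≤ d → ∀ K : ℝ, 0 < K → ∃ c : ℕ, ∃ C1 : ℝ, 0 < C1 ∧
      ∀ r : ℕ, c < r → ∀ T : Finset (Fin d → ℝ),
        (∀ t ∈ T, ∀ j, t j ∈ Set.Ico (0 : ℝ) 1) →
        T.card = 2 ^ r → disp d ↑T < K / 2 ^ r →
        ∀ s : Fin d → ℕ, (∑ j, s j) = r - c →
        ∀ coef : (Fin d → ℤ) → ℂ,
          C1 * supNorm d (trigPoly d (Rbox d s) coef) ≤
            (⨆ t : T, ‖
              (trigPoly d (Rbox d s) coef (fun j => 2 * Real.pi * (t : Fin d → ℝ) j))‖) ∧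
          (⨆ t : T, ‖
              (trigPoly d (Rbox d s) coef (fun j => 2 * Real.pi * (t : Fin d → ℝ) j))‖) ≤
            supNorm d (trigPoly d (Rbox d s) coef) := by
  intro d _ K _
  set A : ℝ := 4 * Real.pi * Real.exp 1 * d
  obtain ⟨c, hc⟩ := pow_unbounded_of_one_lt (K * A ^ d) one_lt_two
  refine ⟨c, 1 / 2, one_half_pos, fun r hr T _ _ hdisp s hs coef => ?_⟩
  obtain ⟨xm, hxm, hmax⟩ := exists_forall_norm_trigPoly_le (Rbox d s) coef
  rw [supNorm_eq_of_forall_norm_le hxm hmax]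
  refine ⟨?_, Real.iSup_le (fun t => hmax _) (norm_nonneg _)⟩
  have hvol : K / 2 ^ r ≤ ∏ j, 1 / (A * 2 ^ s j) := by
    have h2r : (2 : ℝ) ^ r = 2 ^ (r - c) * 2 ^ c := by rw [← pow_add, Nat.sub_add_cancel hr.le]
    simp only [one_div, prod_inv_distrib, prod_mul_distrib, prod_const, card_univ,
      Fintype.card_fin, prod_pow_eq_pow_sum, hs]
    rw [div_le_iff₀ (by positivity), h2r, ← div_eq_inv_mul, le_div_iff₀ (by positivity)]
    nlinarith [pow_pos (two_pos : (0 : ℝ) < 2) (r - c)]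
  obtain ⟨t, htT, ht⟩ :=
    exists_mem_half_norm_le_norm_trigPoly coef hxm hmax (hdisp.trans_le hvol)
  calc 1 / 2 * ‖trigPoly d (Rbox d s) coef xm‖
      ≤ ‖trigPoly d (Rbox d s) coef fun j => 2 * Real.pi * t j‖ := by linarith
    _ ≤ _ := le_ciSup (f := fun t : T => ‖trigPoly d (Rbox d s) coef fun j =>
          2 * Real.pi * (t : Fin d → ℝ) j‖) ⟨_, Set.forall_mem_range.2 fun _ => hmax _⟩ ⟨t, htT⟩
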